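/- arXiv:2411.10067 — 6 statements merged into one kernel-verified Lean document; each statement's English description precedes it below -/
import Mathlib

section
/- There is no perfect deterministic classical strategy for the magic square game: there do not exist functions f1, f2 : Fin 3 → (Fin 3 → ZMod 2) such that for every row index r : Fin 3 and column index c : Fin 3 the triple of conditions (f1 r) c = (f2 c) r, (f1 r) 0 + (f1 r) 1 + (f1 r) 2 = 0, and (f2 c) 0 + (f2 c) 1 + (f2 c) 2 = 1 holds. -/
/-!
Fill the square with player 1's answers. Summing all nine entries row by row gives `3 • 0 = 0`
by the row parities; summing them column by column, where the entries are player 2's answers,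
gives `3 • 1 = 1`. No filling of a `3 × 3` square can satisfy both.
-/

open Finset

theorem card_smul_eq_card_smul_of_sum_rows_of_sum_cols {ι κ M : Type*} [Fintype ι] [Fintype κ]
    [AddCommMonoid M] (A : ι → κ → M) {a b : M} (hrow : ∀ i, ∑ j, A i j = a)
    (hcol : ∀ j, ∑ i, A i j = b) : Fintype.card ι • a = Fintype.card κ • b :=
  calc Fintype.card ι • a = ∑ i, ∑ j, A i j := by simp [hrow]
    _ = ∑ j, ∑ i, A i j := sum_comm
    _ = Fintype.card κ • b := by simp [hcol]

/-- There is no perfect deterministic classical strategy for the magic square game. -/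
theorem no_perfect_deterministic_magic_square_strategy :
    ¬ ∃ (f1 f2 : Fin 3 → (Fin 3 → ZMod 2)),
      ∀ r c : Fin 3,
        (f1 r) c = (f2 c) r ∧
        (f1 r) 0 + (f1 r) 1 + (f1 r) 2 = 0 ∧
        (f2 c) 0 + (f2 c) 1 + (f2 c) 2 = 1 := by
  rintro ⟨f1, f2, h⟩
  have hrow : ∀ r, ∑ c, f1 r c = 0 := fun r => by
    rw [Fin.sum_univ_three]
    exact (h r 0).2.1
  have hcol : ∀ c, ∑ r, f1 r c = 1 := fun c => by
    simp only [Fin.sum_univ_three, fun r => (h r c).1]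
    exact (h 0 c).2.2
  have hcount := card_smul_eq_card_smul_of_sum_rows_of_sum_cols f1 hrow hcol
  exact absurd hcount (by decide)
end

section
/- Every deterministic classical strategy wins at most 8 of the 9 question pairs of the magic square game: for all f1, f2 : Fin 3 → (Fin 3 → ZMod 2), the cardinality of the set of pairs (r, c) ∈ Fin 3 × Fin 3 such that (f1 r) c = (f2 c) r, (f1 r) 0 + (f1 r) 1 + (f1 r) 2 = 0, and (f2 c) 0 + (f2 c) 1 + (f2 c) 2 = 1 is at most 8. -/
/-! Summing the 3 × 3 table of answers over all cells, once by rows and once by columns, gives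
`3 • 0 = 3 • 1` in `ZMod 2`, which is false; so no strategy wins all nine question pairs, and
one lost pair already caps the count at 8. -/

open Finset

theorem card_smul_eq_of_row_col_sums {ι κ M : Type*} [Fintype ι] [Fintype κ] [AddCommMonoid M]
    {A : ι → κ → M} {B : κ → ι → M} {a b : M} (hAB : ∀ i j, A i j = B j i)
    (hA : ∀ i, ∑ j, A i j = a) (hB : ∀ j, ∑ i, B j i = b) :
    Fintype.card ι • a = Fintype.card κ • b :=
  calc Fintype.card ι • a = ∑ i, ∑ j, A i j := by simp [hA]
    _ = ∑ j, ∑ i, B j i := by rw [sum_comm]; simp only [hAB]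
    _ = Fintype.card κ • b := by simp [hB]

abbrev MagicSquareWins (r c : Fin 3) (a1 a2 : Fin 3 → ZMod 2) : Prop :=
  a1 c = a2 r ∧ a1 0 + a1 1 + a1 2 = 0 ∧ a2 0 + a2 1 + a2 2 = 1

theorem not_forall_magicSquareWins (f1 f2 : Fin 3 → Fin 3 → ZMod 2) :
    ¬ ∀ r c, MagicSquareWins r c (f1 r) (f2 c) := by
  intro h
  have hrows : ∀ r, ∑ c, f1 r c = 0 := fun r => by
    rw [Fin.sum_univ_three]; exact (h r 0).2.1
  have hcols : ∀ c, ∑ r, f2 c r = 1 := fun c => by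
    rw [Fin.sum_univ_three]; exact (h 0 c).2.2
  have hparity := card_smul_eq_of_row_col_sums (fun r c => (h r c).1) hrows hcols
  exact absurd hparity (by decide)

/-- Every deterministic classical strategy wins at most 8 of the 9 question pairs
of the magic square game. -/
theorem deterministic_magic_square_wins_at_most_eight
    (f1 f2 : Fin 3 → (Fin 3 → ZMod 2)) :
    (Finset.univ.filter (fun p : Fin 3 × Fin 3 =>
      (f1 p.1) p.2 = (f2 p.2) p.1 ∧
      (f1 p.1) 0 + (f1 p.1) 1 + (f1 p.1) 2 = 0 ∧
      (f2 p.2) 0 + (f2 p.2) 1 + (f2 p.2) 2 = 1)).card ≤ 8 := by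
  obtain ⟨r, c, hlost⟩ : ∃ r c, ¬ MagicSquareWins r c (f1 r) (f2 c) := by
    simpa only [not_forall] using not_forall_magicSquareWins f1 f2
  have hlt := card_lt_card <| filter_ssubset (s := univ)
    (p := fun q : Fin 3 × Fin 3 => MagicSquareWins q.1 q.2 (f1 q.1) (f2 q.2)) |>.2
    ⟨(r, c), mem_univ _, hlost⟩
  rw [card_univ, Fintype.card_prod, Fintype.card_fin] at hlt
  exact Nat.le_of_lt_succ hlt
end

section
/- Classical strategies with arbitrary shared randomness win the magic square game with probability at most 8/9 under uniformly random questions: for every finite type Ω, every function μ : Ω → ℝ with μ ω ≥ 0 for all ω and ∑_ω μ ω = 1, and every pair of families F1, F2 : Ω → (Fin 3 → (Fin 3 → ZMod 2)), the expected number of winning question pairs ∑_ω μ ω * (card of {(r, c) ∈ Fin 3 × Fin 3 | (F1 ω r) c = (F2 ω c) r ∧ (F1 ω r) 0 + (F1 ω r) 1 + (F1 ω r) 2 = 0 ∧ (F2 ω c) 0 + (F2 ω c) 1 + (F2 ω c) 2 = 1}) is at most 8; equivalently, the winning probability (1/9 times this expectation) is at most 8/9. -/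
/-!
Summing all nine cells of the square row by row gives `0` (three even rows), while summing
them column by column gives `3 = 1` in `ZMod 2` (three odd columns). Hence no deterministic
strategy agrees on every cell with both parity constraints, so it loses on at least one of the
nine question pairs; averaging over the shared randomness preserves the bound `8`.
-/

open Finset

theorem card_eq_zero_of_row_even_of_col_odd {ι κ : Type*} [Fintype ι] [Fintype κ]
    (a : ι → κ → ZMod 2) (b : κ → ι → ZMod 2) (hab : ∀ r c, a r c = b c r)
    (ha : ∀ r, ∑ c, a r c = 0) (hb : ∀ c, ∑ r, b c r = 1) :
    (Fintype.card κ : ZMod 2) = 0 :=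
  calc (Fintype.card κ : ZMod 2) = ∑ c, ∑ r, b c r := by simp [hb]
    _ = ∑ r, ∑ c, a r c := by simp only [hab]; exact Finset.sum_comm
    _ = 0 := by simp [ha]

def magicSquareWinning (f1 f2 : Fin 3 → Fin 3 → ZMod 2) : Finset (Fin 3 × Fin 3) :=
  univ.filter fun p : Fin 3 × Fin 3 =>
    (f1 p.1) p.2 = (f2 p.2) p.1 ∧
    (f1 p.1) 0 + (f1 p.1) 1 + (f1 p.1) 2 = 0 ∧
    (f2 p.2) 0 + (f2 p.2) 1 + (f2 p.2) 2 = 1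

theorem exists_not_mem_magicSquareWinning (f1 f2 : Fin 3 → Fin 3 → ZMod 2) :
    ∃ p, p ∉ magicSquareWinning f1 f2 := by
  by_contra! hall
  simp only [magicSquareWinning, mem_filter, mem_univ, true_and] at hall
  have h := card_eq_zero_of_row_even_of_col_odd f1 f2 (fun r c => (hall (r, c)).1)
    (fun r => by simpa [Fin.sum_univ_three] using (hall (r, 0)).2.1)
    (fun c => by simpa [Fin.sum_univ_three] using (hall (0, c)).2.2)
  exact absurd h (by decide)

theorem card_magicSquareWinning_le (f1 f2 : Fin 3 → Fin 3 → ZMod 2) :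
    (magicSquareWinning f1 f2).card ≤ 8 := by
  obtain ⟨p, hp⟩ := exists_not_mem_magicSquareWinning f1 f2
  exact Nat.le_of_lt_succ (by simpa using card_lt_univ_of_notMem hp)

theorem sum_mul_le_of_le {Ω : Type*} [Fintype Ω] {μ X : Ω → ℝ} {c : ℝ}
    (hμ0 : ∀ ω, 0 ≤ μ ω) (hμ1 : ∑ ω, μ ω = 1) (hX : ∀ ω, X ω ≤ c) :
    ∑ ω, μ ω * X ω ≤ c :=
  calc ∑ ω, μ ω * X ω ≤ ∑ ω, μ ω * c :=
        sum_le_sum fun ω _ => mul_le_mul_of_nonneg_left (hX ω) (hμ0 ω)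
    _ = c := by rw [← sum_mul, hμ1, one_mul]

/-- Classical strategies with arbitrary shared randomness win the magic square game
with probability at most `8/9` under uniformly random questions. -/
theorem shared_randomness_magic_square_winning_probability_le
    (Ω : Type*) [Fintype Ω] (μ : Ω → ℝ)
    (hμ0 : ∀ ω, 0 ≤ μ ω) (hμ1 : ∑ ω, μ ω = 1)
    (F1 F2 : Ω → (Fin 3 → (Fin 3 → ZMod 2))) :
    (∑ ω, μ ω *
      ((Finset.univ.filter (fun p : Fin 3 × Fin 3 =>
        (F1 ω p.1) p.2 = (F2 ω p.2) p.1 ∧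
        (F1 ω p.1) 0 + (F1 ω p.1) 1 + (F1 ω p.1) 2 = 0 ∧
        (F2 ω p.2) 0 + (F2 ω p.2) 1 + (F2 ω p.2) 2 = 1)).card : ℝ)) ≤ 8 ∧
    (1 / 9 : ℝ) * (∑ ω, μ ω *
      ((Finset.univ.filter (fun p : Fin 3 × Fin 3 =>
        (F1 ω p.1) p.2 = (F2 ω p.2) p.1 ∧
        (F1 ω p.1) 0 + (F1 ω p.1) 1 + (F1 ω p.1) 2 = 0 ∧
        (F2 ω p.2) 0 + (F2 ω p.2) 1 + (F2 ω p.2) 2 = 1)).card : ℝ)) ≤ 8 / 9 := by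
  have h : ∑ ω, μ ω * ((magicSquareWinning (F1 ω) (F2 ω)).card : ℝ) ≤ 8 :=
    sum_mul_le_of_le hμ0 hμ1 fun ω => by exact_mod_cast card_magicSquareWinning_le (F1 ω) (F2 ω)
  have h' : (1 / 9 : ℝ) * ∑ ω, μ ω * ((magicSquareWinning (F1 ω) (F2 ω)).card : ℝ) ≤ 8 / 9 := by
    linarith
  exact ⟨h, h'⟩
end

section
/- The observables within each row of the Mermin–Peres magic square table pairwise commute, and the observables within each column pairwise commute: for all r, c, c' : Fin 3, O r c * O r c' = O r c' * O r c, and for all c, r, r' : Fin 3, O r c * O r' c = O r' c * O r c. -/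
/-!
Each Pauli matrix commutes with itself and with `1` and anticommutes with the other two, so
`P ⊗ Q` and `P' ⊗ Q'` commute as soon as the pairs `(P, P')` and `(Q, Q')` both commute or both
anticommute: in `(P P') ⊗ (Q Q') = (-P' P) ⊗ (-Q' Q)` the two signs cancel. Every pair within a
row or a column of the square is of one of these two kinds, and the signs of the entries do not
affect commutation.
-/

open Matrix
open scoped Kronecker

/-- Pauli `X` matrix. -/
def pauliX : Matrix (Fin 2) (Fin 2) ℂ := !![0, 1; 1, 0]

/-- Pauli `Y` matrix. -/
def pauliY : Matrix (Fin 2) (Fin 2) ℂ := !![0, -Complex.I; Complex.I, 0]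

/-- Pauli `Z` matrix. -/
def pauliZ : Matrix (Fin 2) (Fin 2) ℂ := !![1, 0; 0, -1]

/-- The Mermin–Peres magic square table of observables. -/
def merminPeres : Fin 3 → Fin 3 → Matrix (Fin 2 × Fin 2) (Fin 2 × Fin 2) ℂ :=
  ![![pauliX ⊗ₖ 1, pauliX ⊗ₖ pauliX, 1 ⊗ₖ pauliX],
    ![-(pauliX ⊗ₖ pauliZ), pauliY ⊗ₖ pauliY, -(pauliZ ⊗ₖ pauliX)],
    ![1 ⊗ₖ pauliZ, pauliZ ⊗ₖ pauliZ, pauliZ ⊗ₖ 1]]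

theorem Matrix.neg_kronecker_neg {l m n p α : Type*} [Mul α] [HasDistribNeg α]
    (A : Matrix l m α) (B : Matrix n p α) : (-A) ⊗ₖ (-B) = A ⊗ₖ B := by
  ext
  simp

section Kronecker

variable {l m α : Type*} [Fintype l] [Fintype m]

theorem Commute.kronecker [CommSemiring α] {A C : Matrix l l α} {B D : Matrix m m α}
    (hAC : Commute A C) (hBD : Commute B D) : Commute (A ⊗ₖ B) (C ⊗ₖ D) := by
  rw [Commute, SemiconjBy, ← mul_kronecker_mul, ← mul_kronecker_mul, hAC.eq, hBD.eq]

theorem Matrix.commute_kronecker_of_anticommute [CommRing α] {A C : Matrix l l α}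
    {B D : Matrix m m α} (hAC : A * C = -(C * A)) (hBD : B * D = -(D * B)) :
    Commute (A ⊗ₖ B) (C ⊗ₖ D) := by
  rw [Commute, SemiconjBy, ← mul_kronecker_mul, ← mul_kronecker_mul, hAC, hBD,
    neg_kronecker_neg]

end Kronecker

theorem Fin.commute_of_commute_three {M : Type*} [Mul M] {f : Fin 3 → M}
    (h01 : Commute (f 0) (f 1)) (h02 : Commute (f 0) (f 2)) (h12 : Commute (f 1) (f 2))
    (i j : Fin 3) : Commute (f i) (f j) := by
  fin_cases i <;> fin_cases j <;> simp [h01, h02, h12, h01.symm, h02.symm, h12.symm]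

-- Oriented so that, used as rewrite rules, they prove anticommutation in either order.
theorem pauliY_mul_pauliX : pauliY * pauliX = -(pauliX * pauliY) := by
  ext i j
  fin_cases i <;> fin_cases j <;> simp [pauliX, pauliY, mul_apply]

theorem pauliZ_mul_pauliX : pauliZ * pauliX = -(pauliX * pauliZ) := by
  ext i j
  fin_cases i <;> fin_cases j <;> simp [pauliX, pauliZ, mul_apply]

theorem pauliZ_mul_pauliY : pauliZ * pauliY = -(pauliY * pauliZ) := by
  ext i j
  fin_cases i <;> fin_cases j <;> simp [pauliY, pauliZ, mul_apply]

/-- The observables within each row of the Mermin–Peres magic square table pairwise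
commute, and the observables within each column pairwise commute. -/
theorem merminPeres_row_col_commute :
    (∀ r c c' : Fin 3,
      merminPeres r c * merminPeres r c' = merminPeres r c' * merminPeres r c) ∧
    (∀ c r r' : Fin 3,
      merminPeres r c * merminPeres r' c = merminPeres r' c * merminPeres r c) := by
  refine ⟨fun r => ?_, fun c => ?_⟩
  · refine Fin.commute_of_commute_three ?_ ?_ ?_ <;> fin_cases r <;>
      simp [merminPeres, Commute.kronecker, commute_kronecker_of_anticommute,
        pauliY_mul_pauliX, pauliZ_mul_pauliX, pauliZ_mul_pauliY]
  · refine Fin.commute_of_commute_three (f := fun r => merminPeres r c) ?_ ?_ ?_ <;>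
      fin_cases c <;>
      simp [merminPeres, Commute.kronecker, commute_kronecker_of_anticommute,
        pauliY_mul_pauliX, pauliZ_mul_pauliX, pauliZ_mul_pauliY]
end

section
/- Measuring the extended POVMs on the purified state induces the same classical input distribution as measuring the original POVMs on the mixed state: let d1, d2, Zt be finite types, p : Zt → ℝ with p z ≥ 0 for all z, φz : Zt → ((d1 × d2) → ℂ) a family of vectors, and let φ : Matrix (d1 × d2) (d1 × d2) ℂ be φ = ∑_z (p z : ℂ) • vecMulVec (φz z) (star ∘ φz z). Define the vector ψ : (d1 × Zt) × (d2 × Zt) → ℂ by ψ((a,z),(b,z')) = if z = z' then (Real.sqrt (p z) : ℂ) * φz z (a,b) else 0. Then for all matrices L1 : Matrix d1 d1 ℂ and L2 : Matrix d2 d2 ℂ, ∑_{z1, z2 : Zt} star ψ ⬝ᵥ ((L1 ⊗ₖ (stdBasisMatrix z1 z1 1)) ⊗ₖ (L2 ⊗ₖ (stdBasisMatrix z2 z2 1)) *ᵥ ψ) = trace ((L1 ⊗ₖ L2) * φ). -/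
open Matrix
open scoped Kronecker

/-!
The `(z1, z2)` term of the sum only sees the `(z1, z2)` block of `ψ`, on which the extended
operator acts as `L1 ⊗ L2`. The purification is block diagonal with diagonal blocks
`√p(z) φ_z`, so the sum collapses to `∑ z, p z ⟨φ_z, (L1 ⊗ L2) φ_z⟩ = tr ((L1 ⊗ L2) φ)`.
-/

namespace Matrix

variable {R m n Z Z' : Type*}

def slice (v : (m × Z) × (n × Z') → R) (i : Z) (j : Z') : m × n → R :=
  fun x => v ((x.1, i), (x.2, j))

theorem dotProduct_kronecker_single_mulVec [Semiring R] [Fintype m] [Fintype n] [Fintype Z]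
    [Fintype Z'] [DecidableEq Z] [DecidableEq Z'] (u v : (m × Z) × (n × Z') → R)
    (A : Matrix m m R) (B : Matrix n n R) (i : Z) (j : Z') :
    u ⬝ᵥ (((A ⊗ₖ single i i (1 : R)) ⊗ₖ (B ⊗ₖ single j j (1 : R))) *ᵥ v)
      = slice u i j ⬝ᵥ ((A ⊗ₖ B) *ᵥ slice v i j) := by
  simp [dotProduct, mulVec, Fintype.sum_prod_type, single_apply, slice, ite_and, mul_assoc]

theorem star_smul_dotProduct_mulVec_smul [CommSemiring R] [StarRing R] [Fintype m]
    (M : Matrix m m R) (c : R) (v : m → R) :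
    star (c • v) ⬝ᵥ (M *ᵥ (c • v)) = (star c * c) * (star v ⬝ᵥ (M *ᵥ v)) := by
  rw [star_smul, mulVec_smul, dotProduct_smul, smul_dotProduct, smul_eq_mul, smul_eq_mul]
  ring

theorem trace_mul_vecMulVec [CommSemiring R] [Fintype m] (M : Matrix m m R) (u w : m → R) :
    trace (M * vecMulVec u w) = w ⬝ᵥ (M *ᵥ u) := by
  rw [mul_vecMulVec, trace_vecMulVec, dotProduct_comm]

end Matrix

theorem purification_extended_povm_input_distribution_general
    {d1 d2 Zt : Type*} [Fintype d1] [Fintype d2] [Fintype Zt]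
    [DecidableEq Zt]
    (p : Zt → ℝ) (hp : ∀ z, 0 ≤ p z)
    (φz : Zt → ((d1 × d2) → ℂ))
    (φ : Matrix (d1 × d2) (d1 × d2) ℂ)
    (hφ : φ = ∑ z, (p z : ℂ) • vecMulVec (φz z) (star ∘ φz z))
    (ψ : (d1 × Zt) × (d2 × Zt) → ℂ)
    (hψ : ∀ (a : d1) (z : Zt) (b : d2) (z' : Zt),
      ψ ((a, z), (b, z')) =
        if z = z' then (Real.sqrt (p z) : ℂ) * φz z (a, b) else 0)
    (L1 : Matrix d1 d1 ℂ) (L2 : Matrix d2 d2 ℂ) :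
    ∑ z1 : Zt, ∑ z2 : Zt,
      star ψ ⬝ᵥ
        (((L1 ⊗ₖ single z1 z1 (1 : ℂ)) ⊗ₖ
          (L2 ⊗ₖ single z2 z2 (1 : ℂ))) *ᵥ ψ)
      = ((L1 ⊗ₖ L2) * φ).trace := by
  have hslice : ∀ z1 z2,
      slice ψ z1 z2 = if z1 = z2 then (Real.sqrt (p z1) : ℂ) • φz z1 else 0 := by
    intro z1 z2
    ext x
    split_ifs <;> simp_all [slice]
  have hsqrt : ∀ z, star (Real.sqrt (p z) : ℂ) * Real.sqrt (p z) = p z := fun z => by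
    rw [Complex.star_def, Complex.conj_ofReal, ← Complex.ofReal_mul, Real.mul_self_sqrt (hp z)]
  calc _ = ∑ z1, ∑ z2, star (slice ψ z1 z2) ⬝ᵥ ((L1 ⊗ₖ L2) *ᵥ slice ψ z1 z2) := by
        simp_rw [dotProduct_kronecker_single_mulVec]; rfl
    _ = ∑ z, star (slice ψ z z) ⬝ᵥ ((L1 ⊗ₖ L2) *ᵥ slice ψ z z) :=
        Finset.sum_congr rfl fun z1 _ => Fintype.sum_eq_single z1 fun z2 h => by
          simp [hslice, Ne.symm h]
    _ = ∑ z, (p z : ℂ) * (star (φz z) ⬝ᵥ ((L1 ⊗ₖ L2) *ᵥ φz z)) := by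
        simp_rw [hslice, if_pos, star_smul_dotProduct_mulVec_smul, hsqrt]
    _ = ((L1 ⊗ₖ L2) * φ).trace := by
        simp_rw [hφ, Matrix.mul_sum, trace_sum, mul_smul_comm, trace_smul, trace_mul_vecMulVec]
        rfl

/-- Measuring the extended POVMs on the purified state induces the same classical
input distribution as measuring the original POVMs on the mixed state. -/
theorem purification_extended_povm_input_distribution
    {d1 d2 Zt : Type*} [Fintype d1] [Fintype d2] [Fintype Zt]
    [DecidableEq d1] [DecidableEq d2] [DecidableEq Zt]
    (p : Zt → ℝ) (hp : ∀ z, 0 ≤ p z)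
    (φz : Zt → ((d1 × d2) → ℂ))
    (φ : Matrix (d1 × d2) (d1 × d2) ℂ)
    (hφ : φ = ∑ z, (p z : ℂ) • vecMulVec (φz z) (star ∘ φz z))
    (ψ : (d1 × Zt) × (d2 × Zt) → ℂ)
    (hψ : ∀ (a : d1) (z : Zt) (b : d2) (z' : Zt),
      ψ ((a, z), (b, z')) =
        if z = z' then (Real.sqrt (p z) : ℂ) * φz z (a, b) else 0)
    (L1 : Matrix d1 d1 ℂ) (L2 : Matrix d2 d2 ℂ) :
    ∑ z1 : Zt, ∑ z2 : Zt,
      star ψ ⬝ᵥ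
        (((L1 ⊗ₖ single z1 z1 (1 : ℂ)) ⊗ₖ
          (L2 ⊗ₖ single z2 z2 (1 : ℂ))) *ᵥ ψ)
      = ((L1 ⊗ₖ L2) * φ).trace :=
  purification_extended_povm_input_distribution_general p hp φz φ hφ ψ hψ L1 L2
end

section
/- Parity constraint for commuting involutions: let n be a finite type and A, B, C : Matrix n n ℂ be Hermitian matrices with A * A = 1, B * B = 1, C * C = 1, pairwise commuting (A*B = B*A, A*C = C*A, B*C = C*B), and satisfying A * B * C = σ • 1 for some σ : ℂ with σ = 1 or σ = -1. Then for all ε1, ε2, ε3 : ℂ, each equal to 1 or -1, with ε1 * ε2 * ε3 = -σ, one has (1 + ε1 • A) * (1 + ε2 • B) * (1 + ε3 • C) = 0. -/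
/-!
Rescaling the involutions to `a = ε1 • A` and `b = ε2 • B` keeps them commuting involutions,
and the relation `A * B * C = σ • 1` together with `C * C = 1` and the sign condition turns
`ε3 • C` into `-(a * b)`. The product then vanishes because `1 + a` absorbs `a`:
`(1 + a) * a = 1 + a`, so `(1 + a) * (1 + b) * (a * b) = (1 + a) * (1 + b)`.
-/

section Ring

variable {R : Type*} [Ring R] {a b : R}

theorem one_add_mul_self_of_mul_self_eq_one (ha : a * a = 1) : (1 + a) * a = 1 + a := by
  rw [add_mul, one_mul, ha, add_comm]

theorem one_add_mul_one_add_mul_one_sub_mul_eq_zero (ha : a * a = 1) (hb : b * b = 1)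
    (hab : Commute a b) : (1 + a) * (1 + b) * (1 - a * b) = 0 := by
  have hba : Commute (1 + b) a := (Commute.one_left a).add_left hab.symm
  have habsorb : (1 + a) * (1 + b) * (a * b) = (1 + a) * (1 + b) :=
    calc (1 + a) * (1 + b) * (a * b) = (1 + a) * ((1 + b) * a) * b := by noncomm_ring
      _ = (1 + a) * a * ((1 + b) * b) := by rw [hba.eq]; noncomm_ring
      _ = (1 + a) * (1 + b) := by
        rw [one_add_mul_self_of_mul_self_eq_one ha, one_add_mul_self_of_mul_self_eq_one hb]
  rw [mul_sub, mul_one, habsorb, sub_self]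

end Ring

theorem smul_mul_smul_self_eq_one {K A : Type*} [CommSemiring K] [Semiring A] [Algebra K A]
    {c : K} {a : A} (hc : c * c = 1) (ha : a * a = 1) : (c • a) * (c • a) = 1 := by
  rw [smul_mul_smul_comm, hc, ha, one_smul]

theorem commuting_involutions_parity_projector_eq_zero_general
    {n : Type*} [Fintype n] [DecidableEq n]
    (A B C : Matrix n n ℂ)
    (hA2 : A * A = 1) (hB2 : B * B = 1) (hC2 : C * C = 1)
    (hAB : A * B = B * A)
    (σ : ℂ)
    (hABC : A * B * C = σ • (1 : Matrix n n ℂ)) :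
    ∀ ε1 ε2 ε3 : ℂ,
      (ε1 = 1 ∨ ε1 = -1) → (ε2 = 1 ∨ ε2 = -1) → (ε3 = 1 ∨ ε3 = -1) →
      ε1 * ε2 * ε3 = -σ →
      (1 + ε1 • A) * (1 + ε2 • B) * (1 + ε3 • C) = 0 := by
  intro ε1 ε2 ε3 h1 h2 _ hprod
  have hε1 : ε1 * ε1 = 1 := mul_self_eq_one_iff.mpr h1
  have hε2 : ε2 * ε2 = 1 := mul_self_eq_one_iff.mpr h2
  have hAB_C : A * B = σ • C :=
    calc A * B = A * B * C * C := by rw [mul_assoc _ C, hC2, mul_one]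
      _ = σ • C := by rw [hABC, smul_one_mul]
  have hε3 : ε3 = -(ε1 * ε2 * σ) := by
    linear_combination (ε1 * ε2) * hprod - ε3 * hε1 - ε3 * ε1 ^ 2 * hε2
  have hC : ε3 • C = -((ε1 • A) * (ε2 • B)) := by
    rw [smul_mul_smul_comm, hAB_C, smul_smul, hε3, neg_smul]
  rw [hC, ← sub_eq_add_neg]
  exact one_add_mul_one_add_mul_one_sub_mul_eq_zero (smul_mul_smul_self_eq_one hε1 hA2)
    (smul_mul_smul_self_eq_one hε2 hB2) ((Commute.smul_left hAB _).smul_right _)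

/-- Parity constraint for commuting involutions: if pairwise-commuting Hermitian
involutions `A`, `B`, `C` satisfy `A * B * C = σ • 1` with `σ = ±1`, then the joint
eigenprojector onto any sign pattern `(ε1, ε2, ε3)` with `ε1 * ε2 * ε3 = -σ` vanishes. -/
theorem commuting_involutions_parity_projector_eq_zero
    {n : Type*} [Fintype n] [DecidableEq n]
    (A B C : Matrix n n ℂ)
    (hA : A.IsHermitian) (hB : B.IsHermitian) (hC : C.IsHermitian)
    (hA2 : A * A = 1) (hB2 : B * B = 1) (hC2 : C * C = 1)
    (hAB : A * B = B * A) (hAC : A * C = C * A) (hBC : B * C = C * B)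
    (σ : ℂ) (hσ : σ = 1 ∨ σ = -1)
    (hABC : A * B * C = σ • (1 : Matrix n n ℂ)) :
    ∀ ε1 ε2 ε3 : ℂ,
      (ε1 = 1 ∨ ε1 = -1) → (ε2 = 1 ∨ ε2 = -1) → (ε3 = 1 ∨ ε3 = -1) →
      ε1 * ε2 * ε3 = -σ →
      (1 + ε1 • A) * (1 + ε2 • B) * (1 + ε3 • C) = 0 :=
  commuting_involutions_parity_projector_eq_zero_general A B C hA2 hB2 hC2 hAB σ hABC
end
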